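/- Consider the linear system for (φ, μ, r) in H²(Ω) × H²(Ω) × ℝ (with homogeneous Neumann boundary conditions for φ and μ): φ = τ div(m ∇μ), μ = −ε Δφ + (r/(εQ)) b, r = (1/(2εQ)) ∫_Ω b φ dx, where τ, ε, Q > 0 are constants, m ∈ L∞(Ω) with m ≥ m0 > 0, and b ∈ L²(Ω) is given. Then the only solution is φ = 0, μ = 0, r = 0. -/

import Mathlib

/-!
Testing the first equation with `μ`, the second with `φ`, and using the third to rewrite
`∫ b φ = 2εQ r` gives the energy identity `-τ ∫ m |∇μ|² = ε ∫ |∇φ|² + 2 r²`. Both sides have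
opposite signs, so `r = 0` and `∇μ = ∇φ = 0` almost everywhere on `Ω`. Testing the second equation
with `μ` and the first with `φ` then leaves `∫ μ² = 0` and `∫ φ² = 0`.
-/

open MeasureTheory Set
open scoped InnerProductSpace

theorem ContDiff.continuous_gradient {F : Type*} [NormedAddCommGroup F] [InnerProductSpace ℝ F]
    [CompleteSpace F] {f : F → ℝ} {n : WithTop ℕ∞} (hf : ContDiff ℝ n f) (hn : n ≠ 0) :
    Continuous (gradient f) :=
  (InnerProductSpace.toDual ℝ F).symm.continuous.comp (hf.continuous_fderiv hn)

theorem eq_zero_of_neg_mul_eq_mul_add_sq {τ ε A B r : ℝ} (hτ : 0 < τ) (hε : 0 < ε)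
    (hA : 0 ≤ A) (hB : 0 ≤ B) (h : -(τ * A) = ε * B + 2 * r ^ 2) :
    A = 0 ∧ B = 0 ∧ r = 0 := by
  have := mul_nonneg hτ.le hA
  have := mul_nonneg hε.le hB
  have := sq_nonneg r
  refine ⟨?_, ?_, ?_⟩ <;> nlinarith

section WeightedEnergy

variable {α E : Type*} [MeasurableSpace α] {μ : Measure α} {s : Set α}
  [NormedAddCommGroup E] [InnerProductSpace ℝ E] {w : α → ℝ} {g : α → E}

theorem ae_eq_zero_of_setIntegral_mul_inner_self_eq_zero (hs : MeasurableSet s)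
    (hw : ∀ x ∈ s, 0 < w x) (hint : IntegrableOn (fun x => w x * ⟪g x, g x⟫_ℝ) s μ)
    (h : ∫ x in s, w x * ⟪g x, g x⟫_ℝ ∂μ = 0) : g =ᵐ[μ.restrict s] 0 := by
  have hnonneg : 0 ≤ᵐ[μ.restrict s] fun x => w x * ⟪g x, g x⟫_ℝ := by
    filter_upwards [ae_restrict_mem hs] with x hx
    exact mul_nonneg (hw x hx).le real_inner_self_nonneg
  filter_upwards [(integral_eq_zero_iff_of_nonneg_ae hnonneg hint).mp h, ae_restrict_mem hs]
    with x hx hxs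
  exact inner_self_eq_zero.mp ((mul_eq_zero.mp hx).resolve_left (hw x hxs).ne')

theorem ae_eq_zero_of_setIntegral_inner_self_eq_zero (hs : MeasurableSet s)
    (hint : IntegrableOn (fun x => ⟪g x, g x⟫_ℝ) s μ) (h : ∫ x in s, ⟪g x, g x⟫_ℝ ∂μ = 0) :
    g =ᵐ[μ.restrict s] 0 :=
  ae_eq_zero_of_setIntegral_mul_inner_self_eq_zero (w := 1) hs (fun _ _ => one_pos)
    (by simpa only [Pi.one_apply, one_mul] using hint) (by simpa only [Pi.one_apply, one_mul] using h)

end WeightedEnergy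

section BoundedDomain

variable {X : Type*} [MetricSpace X] [ProperSpace X] [MeasurableSpace X] [BorelSpace X]
  {μ : Measure X} [IsFiniteMeasureOnCompacts μ] {s : Set X}

theorem Continuous.integrableOn_of_isBounded {E : Type*} [NormedAddCommGroup E] {f : X → E}
    (hf : Continuous f) (hs : Bornology.IsBounded s) : IntegrableOn f s μ :=
  (hf.continuousOn.integrableOn_compact hs.isCompact_closure).mono_set subset_closure

theorem integrableOn_mul_of_isBounded {m f : X → ℝ} {C : ℝ} (hs : MeasurableSet s)
    (hsb : Bornology.IsBounded s) (hm : AEStronglyMeasurable m (μ.restrict s))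
    (hmC : ∀ x ∈ s, ‖m x‖ ≤ C) (hf : Continuous f) : IntegrableOn (fun x => m x * f x) s μ :=
  (hf.integrableOn_of_isBounded hsb).bdd_mul hm ((ae_restrict_iff' hs).mpr (.of_forall hmC))

theorem eqOn_zero_of_setIntegral_mul_self_eq_zero [μ.IsOpenPosMeasure] {f : X → ℝ}
    (hf : Continuous f) (hs : IsOpen s) (hsb : Bornology.IsBounded s)
    (h : ∫ x in s, f x * f x ∂μ = 0) : EqOn f 0 s := by
  have hae : f =ᵐ[μ.restrict s] 0 :=
    ae_eq_zero_of_setIntegral_inner_self_eq_zero hs.measurableSet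
      ((hf.inner hf).integrableOn_of_isBounded hsb)
      (by simpa only [RCLike.inner_apply, conj_trivial] using h)
  exact Measure.eqOn_open_of_ae_eq hae hs hf.continuousOn continuousOn_const

end BoundedDomain

theorem stmt_16_general {d : ℕ} (Ω : Set (EuclideanSpace ℝ (Fin d)))
    (hΩopen : IsOpen Ω) (hΩbdd : Bornology.IsBounded Ω)
    (τ ε Q m0 m1 : ℝ) (hτ : 0 < τ) (hε : 0 < ε) (hQ : 0 < Q) (hm0 : 0 < m0)
    (m : EuclideanSpace ℝ (Fin d) → ℝ) (hmmeas : Measurable m)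
    (hm : ∀ x ∈ Ω, m0 ≤ m x ∧ m x ≤ m1)
    (b : EuclideanSpace ℝ (Fin d) → ℝ)
    (φ μ : EuclideanSpace ℝ (Fin d) → ℝ) (r : ℝ)
    (hφ : ContDiff ℝ 2 φ) (hμ : ContDiff ℝ 2 μ)
    (weak1 : ∀ ψ : EuclideanSpace ℝ (Fin d) → ℝ, ContDiff ℝ 1 ψ →
      ∫ x in Ω, φ x * ψ x =
        -(τ * ∫ x in Ω, m x * (inner ℝ (gradient μ x) (gradient ψ x) : ℝ)))
    (weak2 : ∀ ψ : EuclideanSpace ℝ (Fin d) → ℝ, ContDiff ℝ 1 ψ →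
      ∫ x in Ω, μ x * ψ x =
        ε * (∫ x in Ω, (inner ℝ (gradient φ x) (gradient ψ x) : ℝ))
          + (r / (ε * Q)) * ∫ x in Ω, b x * ψ x)
    (hr : r = (1 / (2 * ε * Q)) * ∫ x in Ω, b x * φ x) :
    Set.EqOn φ 0 Ω ∧ Set.EqOn μ 0 Ω ∧ r = 0 := by
  have hΩm : MeasurableSet Ω := hΩopen.measurableSet
  have hm_pos : ∀ x ∈ Ω, 0 < m x := fun x hx => hm0.trans_le (hm x hx).1
  have hgφ := hφ.continuous_gradient two_ne_zero
  have hgμ := hμ.continuous_gradient two_ne_zero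
  have hintA : IntegrableOn (fun x => m x * ⟪gradient μ x, gradient μ x⟫_ℝ) Ω :=
    integrableOn_mul_of_isBounded hΩm hΩbdd hmmeas.aestronglyMeasurable
      (fun x hx => (Real.norm_of_nonneg (hm_pos x hx).le).trans_le (hm x hx).2) (hgμ.inner hgμ)
  have hintB : IntegrableOn (fun x => ⟪gradient φ x, gradient φ x⟫_ℝ) Ω :=
    (hgφ.inner hgφ).integrableOn_of_isBounded hΩbdd
  have henergy : -(τ * ∫ x in Ω, m x * ⟪gradient μ x, gradient μ x⟫_ℝ)
      = ε * (∫ x in Ω, ⟪gradient φ x, gradient φ x⟫_ℝ) + 2 * r ^ 2 := by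
    have hbφ : ∫ x in Ω, b x * φ x = 2 * ε * Q * r := by rw [hr]; field_simp
    rw [← weak1 μ (hμ.of_le one_le_two)]
    simp_rw [mul_comm (φ _)]
    rw [weak2 φ (hφ.of_le one_le_two), hbφ]
    field_simp
  obtain ⟨hA0, hB0, hr0⟩ := eq_zero_of_neg_mul_eq_mul_add_sq hτ hε
    (setIntegral_nonneg hΩm fun x hx => mul_nonneg (hm_pos x hx).le real_inner_self_nonneg)
    (setIntegral_nonneg hΩm fun _ _ => real_inner_self_nonneg) henergy
  have hgμ0 := ae_eq_zero_of_setIntegral_mul_inner_self_eq_zero hΩm hm_pos hintA hA0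
  have hgφ0 := ae_eq_zero_of_setIntegral_inner_self_eq_zero hΩm hintB hB0
  have hμμ : ∫ x in Ω, μ x * μ x = 0 := by
    rw [weak2 μ (hμ.of_le one_le_two), hr0,
      integral_eq_zero_of_ae (by filter_upwards [hgφ0] with x hx; simp [hx])]
    ring
  have hφφ : ∫ x in Ω, φ x * φ x = 0 := by
    rw [weak1 φ (hφ.of_le one_le_two),
      integral_eq_zero_of_ae (by filter_upwards [hgμ0] with x hx; simp [hx])]
    ring
  exact ⟨eqOn_zero_of_setIntegral_mul_self_eq_zero hφ.continuous hΩopen hΩbdd hφφ,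
    eqOn_zero_of_setIntegral_mul_self_eq_zero hμ.continuous hΩopen hΩbdd hμμ, hr0⟩

theorem stmt_16 {d : ℕ} (Ω : Set (EuclideanSpace ℝ (Fin d)))
    (hΩopen : IsOpen Ω) (hΩbdd : Bornology.IsBounded Ω)
    (τ ε Q m0 m1 : ℝ) (hτ : 0 < τ) (hε : 0 < ε) (hQ : 0 < Q) (hm0 : 0 < m0)
    (m : EuclideanSpace ℝ (Fin d) → ℝ) (hmmeas : Measurable m)
    (hm : ∀ x ∈ Ω, m0 ≤ m x ∧ m x ≤ m1)
    (b : EuclideanSpace ℝ (Fin d) → ℝ) (hb : MemLp b 2 (volume.restrict Ω))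
    (φ μ : EuclideanSpace ℝ (Fin d) → ℝ) (r : ℝ)
    (hφ : ContDiff ℝ 2 φ) (hμ : ContDiff ℝ 2 μ)
    (weak1 : ∀ ψ : EuclideanSpace ℝ (Fin d) → ℝ, ContDiff ℝ 1 ψ →
      ∫ x in Ω, φ x * ψ x =
        -(τ * ∫ x in Ω, m x * (inner ℝ (gradient μ x) (gradient ψ x) : ℝ)))
    (weak2 : ∀ ψ : EuclideanSpace ℝ (Fin d) → ℝ, ContDiff ℝ 1 ψ →
      ∫ x in Ω, μ x * ψ x =
        ε * (∫ x in Ω, (inner ℝ (gradient φ x) (gradient ψ x) : ℝ))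
          + (r / (ε * Q)) * ∫ x in Ω, b x * ψ x)
    (hr : r = (1 / (2 * ε * Q)) * ∫ x in Ω, b x * φ x) :
    Set.EqOn φ 0 Ω ∧ Set.EqOn μ 0 Ω ∧ r = 0 :=
  stmt_16_general Ω hΩopen hΩbdd τ ε Q m0 m1 hτ hε hQ hm0 m hmmeas hm b φ μ r hφ hμ weak1 weak2 hr
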